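/- arXiv:2308.02859 — 2 statements merged into one kernel-verified Lean document; each statement's English description precedes it below -/
import Mathlib

section
/- Let X be a circuit-cocircuit intersection of a finite matroid M with |X| = k ≥ 4. Then M has a minor N with ground set of size 2k−2 such that the rank of N equals k−1, the rank of the dual N* equals k−1, and X is both a circuit and a cocircuit of N. -/
/-!
Write `X = C ∩ K`. Contracting `C \ K` and deleting `K \ C` leaves `X` a circuit and a cocircuit.
In a smallest minor `N` where `X` is still both, `X` spans `N` and `N✶`: an element outside the
closure of `X` could be contracted, and one outside its coclosure deleted, keeping both properties.
So `X` minus any point is a base of `N` and of `N✶`, giving `r(N) = r(N✶) = k - 1` and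
`|E(N)| = r(N) + r(N✶) = 2k - 2`.
-/

open Set

namespace Matroid

variable {α : Type*}

/-- A circuit: a minimal dependent set. -/
def IsCircuit' (M : Matroid α) (C : Set α) : Prop :=
  C ⊆ M.E ∧ ¬ M.Indep C ∧ ∀ D, D ⊂ C → M.Indep D

/-- A cocircuit: a circuit of the dual matroid. -/
def IsCocircuit' (M : Matroid α) (C : Set α) : Prop :=
  M✶.IsCircuit' C

/-- A circuit-cocircuit intersection (CCI). -/
def IsCCI (M : Matroid α) (X : Set α) : Prop :=
  ∃ C K, M.IsCircuit' C ∧ M.IsCocircuit' K ∧ X = C ∩ K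

/-- A hyperplane: a maximal proper flat. -/
def IsHyperplane (M : Matroid α) (H : Set α) : Prop :=
  M.IsFlat H ∧ H ≠ M.E ∧ ∀ F, M.IsFlat F → H ⊂ F → F = M.E

/-- The rank of a set: the largest size of an independent subset. -/
noncomputable def rk (M : Matroid α) (A : Set α) : ℕ :=
  sSup {n | ∃ I, I ⊆ A ∧ M.Indep I ∧ I.ncard = n}

/-- The rank of a matroid. -/
noncomputable def rank (M : Matroid α) : ℕ := M.rk M.E

/-- Deletion of a set from a matroid. -/
def del (M : Matroid α) (D : Set α) : Matroid α := M.restrict (M.E \ D)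

/-- Contraction of a set in a matroid. -/
def con (M : Matroid α) (C : Set α) : Matroid α := (M✶.restrict (M.E \ C))✶

/-- `N` is a minor of `M` if it is obtained by a contraction followed by a deletion. -/
def IsMinor' (N M : Matroid α) : Prop := ∃ C D, N = (M.con C).del D

end Matroid

open Matroid

namespace Matroid

variable {α : Type*} {M N : Matroid α} {B C K X : Set α} {e : α}

lemma isCircuit'_iff : M.IsCircuit' C ↔ M.IsCircuit C := by
  rw [isCircuit_iff_forall_ssubset, Dep, IsCircuit']
  tauto

lemma isCocircuit'_iff : M.IsCocircuit' K ↔ M.IsCocircuit K :=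
  isCircuit'_iff

lemma isMinor'_iff : N.IsMinor' M ↔ N ≤m M :=
  Iff.rfl

lemma IsMinor.finite [M.Finite] (h : N ≤m M) : N.Finite :=
  ⟨M.ground_finite.subset h.subset⟩

lemma rank_eq_ncard_of_isBase [M.Finite] (hB : M.IsBase B) : M.rank = B.ncard := by
  have hle : ∀ n ∈ {n | ∃ I, I ⊆ M.E ∧ M.Indep I ∧ I.ncard = n}, n ≤ B.ncard := by
    rintro n ⟨I, -, hI, rfl⟩
    obtain ⟨B', hB', hIB'⟩ := hI.exists_isBase_superset
    rw [← hB'.ncard_eq_ncard_of_isBase hB]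
    exact ncard_le_ncard hIB' hB'.finite
  exact le_antisymm (csSup_le ⟨_, B, hB.subset_ground, hB.indep, rfl⟩ hle)
    (le_csSup ⟨_, hle⟩ ⟨B, hB.subset_ground, hB.indep, rfl⟩)

lemma IsCircuit.contractElem_isCircuit_of_notMem_closure (hX : M.IsCircuit X)
    (he : e ∉ M.closure X) : (M ／ {e}).IsCircuit X := by
  by_cases heE : e ∈ M.E
  swap
  · rwa [contractElem_eq_self heE]
  have hunion : ∀ I ⊆ X, M.Indep I → M.Indep (I ∪ {e}) := fun I hIX hI ↦ by
    rw [union_singleton, hI.insert_indep_iff]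
    exact Or.inl ⟨heE, fun h ↦ he (M.closure_subset_closure hIX h)⟩
  have he_indep : M.Indep {e} := by simpa using hunion ∅ (empty_subset X) M.empty_indep
  have hdisj : Disjoint X {e} :=
    disjoint_singleton_right.2 fun h ↦ he (M.subset_closure X hX.subset_ground h)
  rw [isCircuit_iff_forall_ssubset, he_indep.contract_dep_iff]
  exact ⟨⟨hdisj, hX.dep.superset subset_union_left⟩, fun I hI ↦ he_indep.contract_indep_iff.2
    ⟨hdisj.mono_left hI.subset, hunion I hI.subset (hX.ssubset_indep hI)⟩⟩

lemma IsCocircuit.deleteElem_isCocircuit_of_notMem_closure (hX : M.IsCocircuit X)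
    (he : e ∉ M✶.closure X) : (M ＼ {e}).IsCocircuit X := by
  rw [isCocircuit_def, dual_delete]
  exact hX.isCircuit.contractElem_isCircuit_of_notMem_closure he

lemma IsCircuit.isBase_sdiff_singleton (hX : M.IsCircuit X) (hXs : M.Spanning X) (he : e ∈ X) :
    M.IsBase (X \ {e}) :=
  (hX.sdiff_singleton_isBasis he).isBase_of_spanning hXs

lemma ground_ncard_eq_of_isBase_of_isBase_dual [M.Finite] (hB : M.IsBase B) (hB' : M✶.IsBase B) :
    M.E.ncard = 2 * B.ncard := by
  have hcompl : (M.E \ B).ncard = B.ncard := hB.compl_isBase_dual.ncard_eq_ncard_of_isBase hB'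
  rw [← ncard_sdiff_add_ncard_of_subset hB.subset_ground M.ground_finite, hcompl, two_mul]

lemma IsCircuit.exists_isMinor_isCircuit_isCocircuit_inter (hC : M.IsCircuit C)
    (hK : M.IsCocircuit K) (hne : (C ∩ K).Nonempty) :
    ∃ N, N ≤m M ∧ N.IsCircuit (C ∩ K) ∧ N.IsCocircuit (C ∩ K) := by
  have hdisj : Disjoint (C \ K) (K \ C) := disjoint_sdiff_sdiff
  refine ⟨M ／ (C \ K) ＼ (K \ C), contract_delete_isMinor M _ _, ?_, ?_⟩
  · have hcirc := hC.contract_sdiff_isCircuit hne inter_subset_left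
    rw [sdiff_self_inter] at hcirc
    exact delete_isCircuit_iff.2 ⟨hcirc, disjoint_sdiff_right.mono_left inter_subset_left⟩
  · have hcocirc := hK.delete_sdiff_isCocircuit inter_subset_right hne
    rw [sdiff_inter_self_eq_sdiff] at hcocirc
    rw [contract_delete_comm M hdisj, contract_isCocircuit_iff]
    exact ⟨hcocirc, disjoint_sdiff_right.mono_left inter_subset_right⟩

lemma exists_isMinor_spanning_isCircuit_isCocircuit [M.Finite] (hC : M.IsCircuit X)
    (hK : M.IsCocircuit X) :
    ∃ N, N ≤m M ∧ N.IsCircuit X ∧ N.IsCocircuit X ∧ N.Spanning X ∧ N✶.Spanning X := by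
  obtain ⟨N, ⟨hNM, hNC, hNK⟩, hmin⟩ := (measure fun N : Matroid α ↦ N.E.ncard).wf.has_min
    {N | N ≤m M ∧ N.IsCircuit X ∧ N.IsCocircuit X} ⟨M, IsMinor.refl, hC, hK⟩
  have hfin : N.E.Finite := M.ground_finite.subset hNM.subset
  refine ⟨N, hNM, hNC, hNK, ?_, ?_⟩
  · rw [spanning_iff_ground_subset_closure hNC.subset_ground]
    refine fun e he ↦ by_contra fun hecl ↦ hmin (N ／ {e}) ⟨?_, ?_, ?_⟩
      (ncard_sdiff_singleton_lt_of_mem he hfin)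
    · simpa using (contract_delete_isMinor N {e} ∅).trans hNM
    · exact hNC.contractElem_isCircuit_of_notMem_closure hecl
    · refine contract_isCocircuit_iff.2 ⟨hNK, disjoint_singleton_right.2 fun heX ↦ hecl ?_⟩
      exact N.subset_closure X hNC.subset_ground heX
  · rw [spanning_iff_ground_subset_closure (M := N✶) hNK.subset_ground]
    refine fun e he ↦ by_contra fun hecl ↦ hmin (N ＼ {e}) ⟨?_, ?_, ?_⟩
      (ncard_sdiff_singleton_lt_of_mem he hfin)
    · simpa using (contract_delete_isMinor N ∅ {e}).trans hNM
    · refine delete_isCircuit_iff.2 ⟨hNC, disjoint_singleton_right.2 fun heX ↦ hecl ?_⟩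
      exact N✶.subset_closure X hNK.subset_ground heX
    · exact hNK.deleteElem_isCocircuit_of_notMem_closure hecl

end Matroid

theorem stmt_3 {α : Type*} (M : Matroid α) [M.Finite] (X : Set α) (k : ℕ)
    (hX : M.IsCCI X) (hcard : X.ncard = k) (hk : 4 ≤ k) :
    ∃ N : Matroid α, N.IsMinor' M ∧ N.E.ncard = 2 * k - 2 ∧
      N.rank = k - 1 ∧ N✶.rank = k - 1 ∧ N.IsCircuit' X ∧ N.IsCocircuit' X := by
  obtain ⟨C, K, hC, hK, rfl⟩ := hX
  rw [isCircuit'_iff] at hC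
  rw [isCocircuit'_iff] at hK
  have hne : (C ∩ K).Nonempty := nonempty_of_ncard_ne_zero (by omega)
  obtain ⟨N₀, hN₀M, hN₀C, hN₀K⟩ := hC.exists_isMinor_isCircuit_isCocircuit_inter hK hne
  have := hN₀M.finite
  obtain ⟨N, hNN₀, hNC, hNK, hNs, hNs'⟩ := exists_isMinor_spanning_isCircuit_isCocircuit hN₀C hN₀K
  have := hNN₀.finite
  obtain ⟨x, hx⟩ := hne
  have hB : N.IsBase ((C ∩ K) \ {x}) := hNC.isBase_sdiff_singleton hNs hx
  have hB' : N✶.IsBase ((C ∩ K) \ {x}) := IsCircuit.isBase_sdiff_singleton hNK hNs' hx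
  have hBcard : ((C ∩ K) \ {x}).ncard = k - 1 := by rw [ncard_sdiff_singleton_of_mem hx, hcard]
  refine ⟨N, isMinor'_iff.2 (hNN₀.trans hN₀M), ?_, ?_, ?_, isCircuit'_iff.2 hNC,
    isCocircuit'_iff.2 hNK⟩
  · rw [ground_ncard_eq_of_isBase_of_isBase_dual hB hB', hBcard]
    omega
  · rw [rank_eq_ncard_of_isBase hB, hBcard]
  · rw [rank_eq_ncard_of_isBase hB', hBcard]
end

section
/- Let N be a CCI-envelope of a CCI X of size k ≥ 4, and let (J; X₁, X₂), (J'; X₁', X₂') be hyperplane-partitions with J ≠ J'. If Z₁, Z₂ are two blocks of the induced common refinement of X such that Z₁ ∪ Z₂ is contained in no X_i and no X_j', then (J ∩ J') ∪ Z₁ ∪ Z₂ is a hyperplane of N. -/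
/-!
For `x ∈ X`, the set `X \ {x}` is coindependent of size `r(N✶)`, hence a cobase, so
`(E \ X) ∪ {x}` is a base and `r(N) = k - 1`. Since `J ≠ J'` have size `k - 3` inside
`E \ X` of size `k - 2`, we get `J ∪ J' = E \ X` and `|J ∩ J'| = k - 4`.

For `z ∈ X₁ ∩ X₁'`, the independent `(k - 2)`-sets `J + z` and `J' + z` span the hyperplanes
`J ∪ X₁` and `J' ∪ X₁'`; as `J ∪ J' + z` is independent, the closure of `(J ∩ J') + z` is the
intersection of these two hyperplanes, `(J ∩ J') ∪ (X₁ ∩ X₁')`. With `z₂ ∈ X₂ ∩ X₂'` as well,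
`G = (J ∩ J') + z₁ + z₂` is independent of size `r(N) - 1`, and its closure is the union of the
closures of `(J ∩ J') + z₁` and `(J ∩ J') + z₂`: every element lies in one of the flats
`J ∪ X₁`, `J' ∪ X₁'`, `J ∪ X₂`, which contains one of these two sets but not the remaining
`z_j`, and by the exchange property the closure of `G` meets such a flat only in the closure of
the smaller set. The closure of `r - 1` independent elements is a hyperplane. Finally, as
`Z₁ ∪ Z₂` lies in no part, the blocks are `X₁ ∩ X₁'` and `X₂ ∩ X₂'` after relabelling parts.
-/

open Set

namespace Matroid

variable {α : Type*}

lemma IsFlat.closure_subset_of_subset {M : Matroid α} {F X : Set α} (hF : M.IsFlat F)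
    (hXF : X ⊆ F) : M.closure X ⊆ F :=
  hF.closure ▸ M.closure_subset_closure hXF

lemma IsFlat.closure_insert_inter_eq {M : Matroid α} {P A : Set α} {z : α} (hP : M.IsFlat P)
    (hAP : A ⊆ P) (hzP : z ∉ P) : M.closure (insert z A) ∩ P = M.closure A := by
  refine subset_antisymm (fun u ⟨hu, huP⟩ ↦ ?_)
    (subset_inter (M.closure_subset_closure (subset_insert z A)) (hP.closure_subset_of_subset hAP))
  by_contra huA
  exact hzP (hP.closure_subset_of_subset (insert_subset huP hAP) (mem_closure_insert huA hu))

lemma Indep.ncard_le_rank {M : Matroid α} {I : Set α} (hI : M.Indep I) (hE : M.E.Finite) :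
    I.ncard ≤ M.rank :=
  le_csSup ⟨M.E.ncard, fun _ ⟨_, hJE, _, hJ⟩ ↦ hJ ▸ ncard_le_ncard hJE hE⟩
    ⟨I, hI.subset_ground, hI, rfl⟩

lemma IsCocircuit'.isBase_insert_compl {M : Matroid α} {X : Set α} {x : α}
    (hX : M.IsCocircuit' X) (hE : M.E.Finite) (hXcard : X.ncard = M✶.rank + 1) (hx : x ∈ X) :
    M.IsBase (insert x (M.E \ X)) := by
  have hXE : X ⊆ M.E := hX.1
  have hind : M✶.Indep (X \ {x}) := hX.2.2 _ (sdiff_singleton_ssubset.2 hx)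
  obtain ⟨B, hB, hXB⟩ := hind.exists_isBase_superset
  have hBle : B.ncard ≤ M✶.rank := hB.indep.ncard_le_rank hE
  have hXB' : X \ {x} = B := eq_of_subset_of_ncard_le hXB
    (by rw [ncard_sdiff_singleton_of_mem hx]; omega) (hE.subset hB.subset_ground)
  rw [← hXB'] at hB
  convert hB.compl_isBase_of_dual using 1
  rw [Set.sdiff_sdiff_right, inter_singleton_of_mem (hXE hx), union_singleton]

lemma IsHyperplane.not_spanning {M : Matroid α} {H : Set α} (hH : M.IsHyperplane H) :
    ¬ M.Spanning H :=
  fun h ↦ hH.2.1 (hH.1.closure ▸ h.closure_eq)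

section RankFinite

variable {M : Matroid α} [M.RankFinite] {B I H : Set α} {e : α}

lemma Indep.insert_isBase_of_ncard (hI : M.Indep I) (he : e ∈ M.E \ M.closure I)
    (hB : M.IsBase B) (hcard : I.ncard + 1 = B.ncard) : M.IsBase (insert e I) := by
  obtain ⟨B', hB', hIB'⟩ := (hI.insert_indep_iff.2 (Or.inl he)).exists_isBase_superset
  have heI : e ∉ I := fun h ↦ he.2 (M.subset_closure I hI.subset_ground h)
  rwa [eq_of_subset_of_ncard_le hIB' (by
    rw [ncard_insert_of_notMem heI hI.finite, hcard, hB.ncard_eq_ncard_of_isBase hB'])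
    hB'.finite]

lemma IsHyperplane.closure_eq_of_indep (hH : M.IsHyperplane H) (hI : M.Indep I) (hIH : I ⊆ H)
    (hB : M.IsBase B) (hcard : I.ncard + 1 = B.ncard) : M.closure I = H := by
  refine subset_antisymm (hH.1.closure_subset_of_subset hIH) fun t htH ↦ ?_
  by_contra ht
  have hbase := hI.insert_isBase_of_ncard ⟨hH.1.subset_ground htH, ht⟩ hB hcard
  exact hH.not_spanning (hbase.spanning.superset (insert_subset htH hIH) hH.1.subset_ground)

lemma isHyperplane_closure_of_indep (hI : M.Indep I) (hB : M.IsBase B)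
    (hcard : I.ncard + 1 = B.ncard) : M.IsHyperplane (M.closure I) := by
  refine ⟨M.isFlat_closure I, fun hIE ↦ ?_, fun F hF hIF ↦ ?_⟩
  · have hIB := hI.isBase_of_ground_subset_closure hIE.symm.subset
    rw [hIB.ncard_eq_ncard_of_isBase hB] at hcard
    omega
  · obtain ⟨e, heF, heI⟩ := exists_of_ssubset hIF
    have hbase := hI.insert_isBase_of_ncard ⟨hF.subset_ground heF, heI⟩ hB hcard
    refine subset_antisymm hF.subset_ground ?_
    rw [← hbase.closure_eq]
    exact hF.closure_subset_of_subset
      (insert_subset heF ((M.subset_closure I hI.subset_ground).trans hIF.subset))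

lemma IsHyperplane.closure_insert_eq {Y K U : Set α} {z : α} (hH : M.IsHyperplane (K ∪ U))
    (hbase : M.IsBase (insert z Y)) (hzY : z ∉ Y) (hKY : K ⊆ Y) (hK : K.ncard + 1 = Y.ncard)
    (hz : z ∈ U) : M.closure (insert z K) = K ∪ U := by
  have hYfin : Y.Finite := hbase.finite.subset (subset_insert z Y)
  refine hH.closure_eq_of_indep (hbase.indep.subset (insert_subset_insert hKY))
    (insert_subset (Or.inr hz) subset_union_left) hbase ?_
  rw [ncard_insert_of_notMem (fun h ↦ hzY (hKY h)) (hYfin.subset hKY),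
    ncard_insert_of_notMem hzY hYfin, hK]

end RankFinite

lemma Indep.closure_insert_inter_eq {M : Matroid α} {J J' U U' : Set α} {z : α}
    (hI : M.Indep (insert z (J ∪ J'))) (hJ : M.closure (insert z J) = J ∪ U)
    (hJ' : M.closure (insert z J') = J' ∪ U') (hJU' : Disjoint J U') (hJ'U : Disjoint J' U) :
    M.closure (insert z (J ∩ J')) = J ∩ J' ∪ U ∩ U' := by
  rw [insert_union_distrib] at hI
  rw [insert_inter_distrib, hI.closure_inter_eq_inter_closure, hJ, hJ']
  ext a
  have := @disjoint_left.1 hJU' a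
  have := @disjoint_left.1 hJ'U a
  simp only [mem_inter_iff, mem_union]
  tauto

lemma closure_insert_insert_eq_union {M : Matroid α} {C : Set α} {z₁ z₂ : α}
    (hcover : ∀ u ∈ M.E,
      (∃ P, M.IsFlat P ∧ insert z₁ C ⊆ P ∧ z₂ ∉ P ∧ u ∈ P) ∨
      (∃ P, M.IsFlat P ∧ insert z₂ C ⊆ P ∧ z₁ ∉ P ∧ u ∈ P)) :
    M.closure (insert z₂ (insert z₁ C)) = M.closure (insert z₁ C) ∪ M.closure (insert z₂ C) := by
  refine subset_antisymm (fun u hu ↦ ?_) (union_subset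
    (M.closure_subset_closure (subset_insert _ _))
    (M.closure_subset_closure (insert_subset_insert (subset_insert _ _))))
  rcases hcover u (M.closure_subset_ground _ hu) with ⟨P, hP, hCP, hzP, huP⟩ | ⟨P, hP, hCP, hzP, huP⟩
  · exact Or.inl (hP.closure_insert_inter_eq hCP hzP ▸ ⟨hu, huP⟩)
  · rw [insert_comm] at hu
    exact Or.inr (hP.closure_insert_inter_eq hCP hzP ▸ ⟨hu, huP⟩)

/-- The paper's hyperplane-partition `(J; X₁, X₂)`, without its cardinality condition on `J`. -/
def IsHyperplanePartition (M : Matroid α) (X J X₁ X₂ : Set α) : Prop :=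
  X₁ ∪ X₂ = X ∧ Disjoint X₁ X₂ ∧ M.IsHyperplane (J ∪ X₁) ∧ M.IsHyperplane (J ∪ X₂)

namespace IsHyperplanePartition

variable {M : Matroid α} {X J X₁ X₂ : Set α}

lemma symm (h : M.IsHyperplanePartition X J X₁ X₂) : M.IsHyperplanePartition X J X₂ X₁ :=
  ⟨union_comm X₂ X₁ ▸ h.1, h.2.1.symm, h.2.2.2, h.2.2.1⟩

lemma of_mem_of_ne {A₁ A₂ : Set α} (h : M.IsHyperplanePartition X J X₁ X₂)
    (hA₁ : A₁ ∈ ({X₁, X₂} : Set (Set α))) (hA₂ : A₂ ∈ ({X₁, X₂} : Set (Set α)))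
    (hne : A₁ ≠ A₂) : M.IsHyperplanePartition X J A₁ A₂ := by
  rcases hA₁ with rfl | rfl <;> rcases hA₂ with rfl | rfl
  exacts [absurd rfl hne, h, h.symm, absurd rfl hne]

lemma closure_insert_inter_eq [M.RankFinite] {J' X₁' X₂' : Set α} {z : α}
    (hP : M.IsHyperplanePartition X J X₁ X₂) (hP' : M.IsHyperplanePartition X J' X₁' X₂')
    (hJJ' : J ∪ J' = M.E \ X) (hbase : M.IsBase (insert z (M.E \ X)))
    (hJcard : J.ncard + 1 = (M.E \ X).ncard) (hJ'card : J'.ncard + 1 = (M.E \ X).ncard)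
    (hz : z ∈ X₁ ∩ X₁') : M.closure (insert z (J ∩ J')) = J ∩ J' ∪ X₁ ∩ X₁' := by
  have hzY : z ∉ M.E \ X := fun h ↦ h.2 (hP.1 ▸ Or.inl hz.1)
  have hJY : J ⊆ M.E \ X := hJJ' ▸ subset_union_left
  have hJ'Y : J' ⊆ M.E \ X := hJJ' ▸ subset_union_right
  exact (hJJ' ▸ hbase.indep : M.Indep (insert z (J ∪ J'))).closure_insert_inter_eq
    (hP.2.2.1.closure_insert_eq hbase hzY hJY hJcard hz.1)
    (hP'.2.2.1.closure_insert_eq hbase hzY hJ'Y hJ'card hz.2)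
    (disjoint_sdiff_left.mono hJY (hP'.1 ▸ subset_union_left))
    (disjoint_sdiff_left.mono hJ'Y (hP.1 ▸ subset_union_left))

lemma exists_isFlat_of_mem {J' X₁' X₂' : Set α} {z₁ z₂ u : α}
    (hP : M.IsHyperplanePartition X J X₁ X₂) (hP' : M.IsHyperplanePartition X J' X₁' X₂')
    (hJX : Disjoint J X) (hJ'X : Disjoint J' X) (hz₁ : z₁ ∈ X₁ ∩ X₁') (hz₂ : z₂ ∈ X₂ ∩ X₂')
    (hu : u ∈ J ∪ J' ∪ X₁) :
    ∃ P, M.IsFlat P ∧ insert z₁ (J ∩ J') ⊆ P ∧ z₂ ∉ P ∧ u ∈ P := by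
  have hz₂X : z₂ ∈ X := hP.1 ▸ Or.inr hz₂.1
  have hflat {K U U₂ : Set α} (hH : M.IsHyperplane (K ∪ U)) (hKX : Disjoint K X)
      (hUU₂ : Disjoint U U₂) (hz₁U : z₁ ∈ U) (hz₂U₂ : z₂ ∈ U₂) (hK : J ∩ J' ⊆ K)
      (huKU : u ∈ K ∪ U) : ∃ P, M.IsFlat P ∧ insert z₁ (J ∩ J') ⊆ P ∧ z₂ ∉ P ∧ u ∈ P :=
    ⟨K ∪ U, hH.1, insert_subset (Or.inr hz₁U) (hK.trans subset_union_left),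
      fun h ↦ h.elim (disjoint_left.1 hKX · hz₂X) (disjoint_right.1 hUU₂ hz₂U₂), huKU⟩
  rcases hu with (huJ | huJ') | huX₁
  · exact hflat hP.2.2.1 hJX hP.2.1 hz₁.1 hz₂.1 inter_subset_left (Or.inl huJ)
  · exact hflat hP'.2.2.1 hJ'X hP'.2.1 hz₁.2 hz₂.2 inter_subset_right (Or.inl huJ')
  · exact hflat hP.2.2.1 hJX hP.2.1 hz₁.1 hz₂.1 inter_subset_left (Or.inr huX₁)

theorem isHyperplane_inter_union_inter [M.RankFinite] {J' X₁' X₂' : Set α} {z₁ z₂ : α}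
    (hP : M.IsHyperplanePartition X J X₁ X₂) (hP' : M.IsHyperplanePartition X J' X₁' X₂')
    (hJJ' : J ∪ J' = M.E \ X) (hbase : ∀ z ∈ X, M.IsBase (insert z (M.E \ X)))
    (hJcard : J.ncard + 1 = (M.E \ X).ncard) (hJ'card : J'.ncard + 1 = (M.E \ X).ncard)
    (hz₁ : z₁ ∈ X₁ ∩ X₁') (hz₂ : z₂ ∈ X₂ ∩ X₂') :
    M.IsHyperplane (J ∩ J' ∪ X₁ ∩ X₁' ∪ X₂ ∩ X₂') := by
  have hz₁X : z₁ ∈ X := hP.1 ▸ Or.inl hz₁.1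
  have hz₂X : z₂ ∈ X := hP.1 ▸ Or.inr hz₂.1
  have hJY : J ⊆ M.E \ X := hJJ' ▸ subset_union_left
  have hJX : Disjoint J X := disjoint_sdiff_left.mono_left hJY
  have hJ'X : Disjoint J' X := disjoint_sdiff_left.mono_left (hJJ' ▸ subset_union_right)
  have hz₂₁ : z₂ ∉ insert z₁ (J ∩ J') := fun h ↦ h.elim
    (fun h ↦ disjoint_left.1 hP.2.1 hz₁.1 (h ▸ hz₂.1)) (fun h ↦ disjoint_left.1 hJX h.1 hz₂X)
  have hcl₁ := hP.closure_insert_inter_eq hP' hJJ' (hbase z₁ hz₁X) hJcard hJ'card hz₁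
  have hcl₂ := hP.symm.closure_insert_inter_eq hP'.symm hJJ' (hbase z₂ hz₂X) hJcard hJ'card hz₂
  have hGind : M.Indep (insert z₂ (insert z₁ (J ∩ J'))) := by
    refine ((hbase z₁ hz₁X).indep.subset (insert_subset_insert (inter_subset_left.trans hJY)))
      |>.insert_indep_iff.2 (Or.inl ⟨(hbase z₂ hz₂X).subset_ground (mem_insert _ _), ?_⟩)
    rw [hcl₁]
    rintro (h | h)
    · exact hz₂₁ (Or.inr h)
    · exact disjoint_left.1 hP.2.1 h.1 hz₂.1
  have hGcard : (insert z₂ (insert z₁ (J ∩ J'))).ncard + 1 = (insert z₁ (M.E \ X)).ncard := by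
    have hYfin : (M.E \ X).Finite := (hbase z₁ hz₁X).finite.subset (subset_insert _ _)
    have hJJ'fin : (J ∩ J').Finite := hYfin.subset (inter_subset_left.trans hJY)
    have hsum := ncard_union_add_ncard_inter J J' (hYfin.subset hJY)
      (hYfin.subset (hJJ' ▸ subset_union_right))
    rw [hJJ'] at hsum
    rw [ncard_insert_of_notMem hz₂₁ (hJJ'fin.insert z₁),
      ncard_insert_of_notMem (fun h ↦ disjoint_left.1 hJX h.1 hz₁X) hJJ'fin,
      ncard_insert_of_notMem (fun h ↦ h.2 hz₁X) hYfin]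
    omega
  have hclG : M.closure (insert z₂ (insert z₁ (J ∩ J'))) = J ∩ J' ∪ X₁ ∩ X₁' ∪ X₂ ∩ X₂' := by
    rw [closure_insert_insert_eq_union, hcl₁, hcl₂, ← union_union_distrib_left, union_assoc]
    intro u hu
    by_cases huX : u ∈ X
    · rw [← hP.1] at huX
      rcases huX with hu₁ | hu₂
      · exact Or.inl (hP.exists_isFlat_of_mem hP' hJX hJ'X hz₁ hz₂ (Or.inr hu₁))
      · exact Or.inr (hP.symm.exists_isFlat_of_mem hP'.symm hJX hJ'X hz₂ hz₁ (Or.inr hu₂))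
    · exact Or.inl (hP.exists_isFlat_of_mem hP' hJX hJ'X hz₁ hz₂ (Or.inl (hJJ' ▸ ⟨hu, huX⟩)))
  rw [← hclG]
  exact isHyperplane_closure_of_indep hGind (hbase z₁ hz₁X) hGcard

end IsHyperplanePartition

end Matroid

open Matroid

lemma Set.union_eq_of_ncard_add_one {α : Type*} {J J' Y : Set α} (hJ : J ⊆ Y) (hJ' : J' ⊆ Y)
    (hY : Y.Finite) (hne : J ≠ J') (hJcard : J.ncard + 1 = Y.ncard)
    (hJ'card : J'.ncard + 1 = Y.ncard) : J ∪ J' = Y := by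
  have hJ'J : ¬ J' ⊆ J := fun h ↦ hne (eq_of_subset_of_ncard_le h (by omega) (hY.subset hJ)).symm
  have hlt : J.ncard < (J ∪ J').ncard :=
    ncard_lt_ncard ⟨subset_union_left, fun h ↦ hJ'J (subset_union_right.trans h)⟩
      (hY.subset (union_subset hJ hJ'))
  exact eq_of_subset_of_ncard_le (union_subset hJ hJ') (by omega) hY

theorem stmt_9_general {α : Type*} (N : Matroid α) (k : ℕ) (hk : 4 ≤ k)
    (hE : N.E.ncard = 2 * k - 2) (hr' : N✶.rank = k - 1)
    (X : Set α) (hXcard : X.ncard = k)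
    (hXcc : N.IsCocircuit' X)
    (J X₁ X₂ : Set α) (hJ : J ⊆ N.E \ X) (hJcard : J.ncard = k - 3)
    (hX₁₂ : X₁ ∪ X₂ = X) (hdisj : Disjoint X₁ X₂)
    (hH₁ : N.IsHyperplane (J ∪ X₁)) (hH₂ : N.IsHyperplane (J ∪ X₂))
    (J' X₁' X₂' : Set α) (hJ' : J' ⊆ N.E \ X) (hJ'card : J'.ncard = k - 3)
    (hX₁₂' : X₁' ∪ X₂' = X) (hdisj' : Disjoint X₁' X₂')
    (hH₁' : N.IsHyperplane (J' ∪ X₁')) (hH₂' : N.IsHyperplane (J' ∪ X₂'))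
    (hJJ' : J ≠ J')
    (Z₁ Z₂ : Set α)
    (hZ₁ : Z₁ ∈ {Z : Set α | Z.Nonempty ∧ ∃ A ∈ ({X₁, X₂} : Set (Set α)),
            ∃ B ∈ ({X₁', X₂'} : Set (Set α)), Z = A ∩ B})
    (hZ₂ : Z₂ ∈ {Z : Set α | Z.Nonempty ∧ ∃ A ∈ ({X₁, X₂} : Set (Set α)),
            ∃ B ∈ ({X₁', X₂'} : Set (Set α)), Z = A ∩ B})
    (h1 : ¬ Z₁ ∪ Z₂ ⊆ X₁) (h2 : ¬ Z₁ ∪ Z₂ ⊆ X₂)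
    (h3 : ¬ Z₁ ∪ Z₂ ⊆ X₁') (h4 : ¬ Z₁ ∪ Z₂ ⊆ X₂') :
    N.IsHyperplane ((J ∩ J') ∪ Z₁ ∪ Z₂) := by
  obtain ⟨⟨z₁, hz₁⟩, A₁, hA₁, B₁, hB₁, rfl⟩ := hZ₁
  obtain ⟨⟨z₂, hz₂⟩, A₂, hA₂, B₂, hB₂, rfl⟩ := hZ₂
  have hA : A₁ ≠ A₂ := by
    rintro rfl
    have hsub : A₁ ∩ B₁ ∪ A₁ ∩ B₂ ⊆ A₁ := union_subset inter_subset_left inter_subset_left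
    rcases hA₁ with rfl | rfl
    exacts [h1 hsub, h2 hsub]
  have hB : B₁ ≠ B₂ := by
    rintro rfl
    have hsub : A₁ ∩ B₁ ∪ A₂ ∩ B₁ ⊆ B₁ := union_subset inter_subset_right inter_subset_right
    rcases hB₁ with rfl | rfl
    exacts [h3 hsub, h4 hsub]
  have hEfin : N.E.Finite := finite_of_ncard_pos (by omega)
  have : N.Finite := ⟨hEfin⟩
  have hXE : X ⊆ N.E := hXcc.1
  have hYcard : (N.E \ X).ncard = k - 2 := by
    rw [ncard_sdiff hXE (hEfin.subset hXE), hE, hXcard]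
    omega
  have hP : N.IsHyperplanePartition X J X₁ X₂ := ⟨hX₁₂, hdisj, hH₁, hH₂⟩
  have hP' : N.IsHyperplanePartition X J' X₁' X₂' := ⟨hX₁₂', hdisj', hH₁', hH₂'⟩
  exact (hP.of_mem_of_ne hA₁ hA₂ hA).isHyperplane_inter_union_inter (hP'.of_mem_of_ne hB₁ hB₂ hB)
    (union_eq_of_ncard_add_one hJ hJ' hEfin.sdiff hJJ' (by omega) (by omega))
    (fun z hz ↦ hXcc.isBase_insert_compl hEfin (by omega) hz) (by omega) (by omega) hz₁ hz₂

theorem stmt_9 {α : Type*} (N : Matroid α) (k : ℕ) (hk : 4 ≤ k)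
    (hE : N.E.ncard = 2 * k - 2) (hr : N.rank = k - 1) (hr' : N✶.rank = k - 1)
    (X : Set α) (hXcard : X.ncard = k)
    (hXc : N.IsCircuit' X) (hXcc : N.IsCocircuit' X)
    (J X₁ X₂ : Set α) (hJ : J ⊆ N.E \ X) (hJcard : J.ncard = k - 3)
    (hX₁₂ : X₁ ∪ X₂ = X) (hdisj : Disjoint X₁ X₂)
    (hH₁ : N.IsHyperplane (J ∪ X₁)) (hH₂ : N.IsHyperplane (J ∪ X₂))
    (J' X₁' X₂' : Set α) (hJ' : J' ⊆ N.E \ X) (hJ'card : J'.ncard = k - 3)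
    (hX₁₂' : X₁' ∪ X₂' = X) (hdisj' : Disjoint X₁' X₂')
    (hH₁' : N.IsHyperplane (J' ∪ X₁')) (hH₂' : N.IsHyperplane (J' ∪ X₂'))
    (hJJ' : J ≠ J')
    (Z₁ Z₂ : Set α)
    (hZ₁ : Z₁ ∈ {Z : Set α | Z.Nonempty ∧ ∃ A ∈ ({X₁, X₂} : Set (Set α)),
            ∃ B ∈ ({X₁', X₂'} : Set (Set α)), Z = A ∩ B})
    (hZ₂ : Z₂ ∈ {Z : Set α | Z.Nonempty ∧ ∃ A ∈ ({X₁, X₂} : Set (Set α)),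
            ∃ B ∈ ({X₁', X₂'} : Set (Set α)), Z = A ∩ B})
    (hZne : Z₁ ≠ Z₂)
    (h1 : ¬ Z₁ ∪ Z₂ ⊆ X₁) (h2 : ¬ Z₁ ∪ Z₂ ⊆ X₂)
    (h3 : ¬ Z₁ ∪ Z₂ ⊆ X₁') (h4 : ¬ Z₁ ∪ Z₂ ⊆ X₂') :
    N.IsHyperplane ((J ∩ J') ∪ Z₁ ∪ Z₂) :=
  stmt_9_general N k hk hE hr' X hXcard hXcc J X₁ X₂ hJ hJcard hX₁₂ hdisj hH₁ hH₂ J' X₁' X₂' hJ'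
    hJ'card hX₁₂' hdisj' hH₁' hH₂' hJJ' Z₁ Z₂ hZ₁ hZ₂ h1 h2 h3 h4
end
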